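/- For every natural number M ≥ 1 and every real α with 0 ≤ α ≤ (M−1)/e, it holds that ∑_{i=0}^{M−1} α^i/i! > α^M/(M−1)!. Consequently the derivative Φ'(α) = e^{−α}(∑_{i=0}^{M−1} α^i/i! − α^M/(M−1)!) of Φ(α) := e^{−α}∑_{i=1}^{M} α^i/(i−1)! is strictly positive on [0, (M−1)/e], so Φ is strictly increasing there. -/

import Mathlib

/-!
Reindexing, `Φ(α) = e^{-α} S(α)` with `S(α) = ∑_{i<M} α^{i+1}/i!`, so `Φ' = e^{-α} (S' - S)`, and
`S' - S` telescopes to `∑_{i<M} α^i/i! - M α^M/M!`.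

For the inequality, `α^M/(M-1)! = α · α^{M-1}/(M-1)! ≤ α`, because
`α^{M-1} ≤ ((M-1)/e)^{M-1} ≤ (M-1)!`, the last step being the single term `n^n/n! ≤ e^n` of the
exponential series. Finally `α < 1 + α ≤ ∑_{i<M} α^i/i!` once `M ≥ 2`, while for `M = 1` the
hypothesis forces `α = 0`.
-/

/-- `Φ(α) = e^{-α} ∑_{x=1}^{M} α^x/(x-1)!`, the expected per-slot throughput of
frame slotted Aloha with multipacket reception capacity `M`. -/
noncomputable def Phi (M : ℕ) (α : ℝ) : ℝ :=
  Real.exp (-α) * ∑ x ∈ Finset.Icc 1 M, α ^ x / (Nat.factorial (x - 1) : ℝ)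

open Finset Real Nat

theorem div_exp_one_pow_le_factorial (n : ℕ) : ((n : ℝ) / exp 1) ^ n ≤ n ! := by
  have h := pow_div_factorial_le_exp (n : ℝ) n.cast_nonneg n
  rw [div_le_iff₀ (by positivity)] at h
  rw [div_pow, exp_one_pow, div_le_iff₀ (exp_pos _)]
  linarith

theorem pow_div_factorial_le_one {x : ℝ} {n : ℕ} (hx : 0 ≤ x) (hxn : x ≤ n / exp 1) :
    x ^ n / n ! ≤ 1 := by
  rw [div_le_one (by positivity)]
  exact (pow_le_pow_left₀ hx hxn n).trans (div_exp_one_pow_le_factorial n)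

theorem one_add_le_sum_range_pow_div_factorial {x : ℝ} {M : ℕ} (hx : 0 ≤ x) (hM : 2 ≤ M) :
    1 + x ≤ ∑ i ∈ range M, x ^ i / i ! := by
  calc 1 + x = ∑ i ∈ range 2, x ^ i / i ! := by simp [sum_range_succ]
    _ ≤ _ := sum_le_sum_of_subset_of_nonneg (range_subset_range.mpr hM)
        fun i _ _ => by positivity

theorem pow_div_factorial_pred_lt_sum_range {α : ℝ} {M : ℕ} (hM : 1 ≤ M) (h0 : 0 ≤ α)
    (h1 : α ≤ ((M : ℝ) - 1) / exp 1) :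
    α ^ M / (M - 1)! < ∑ i ∈ range M, α ^ i / i ! := by
  obtain rfl | hM2 := hM.eq_or_lt
  · have : α = 0 := le_antisymm (by simpa using h1) h0
    simp [this]
  obtain ⟨n, rfl⟩ := exists_add_of_le hM
  have hn : α ^ n / n ! ≤ 1 := pow_div_factorial_le_one h0 (by simpa using h1)
  calc α ^ (1 + n) / (1 + n - 1)! = α * (α ^ n / n !) := by
        rw [Nat.add_sub_cancel_left, pow_add, pow_one, mul_div_assoc]
    _ ≤ α := mul_le_of_le_one_right h0 hn
    _ < 1 + α := lt_one_add α
    _ ≤ _ := one_add_le_sum_range_pow_div_factorial h0 hM2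

theorem sum_Icc_one_pow_div_factorial_pred (M : ℕ) (α : ℝ) :
    ∑ x ∈ Icc 1 M, α ^ x / (x - 1)! = ∑ i ∈ range M, α ^ (i + 1) / i ! := by
  rw [← Ico_add_one_right_eq_Icc, sum_Ico_eq_sum_range, Nat.add_sub_cancel]
  simp [add_comm]

theorem hasDerivAt_sum_range_pow_succ_div_factorial (M : ℕ) (α : ℝ) :
    HasDerivAt (fun a : ℝ => ∑ i ∈ range M, a ^ (i + 1) / i !)
      (∑ i ∈ range M, (i + 1) * α ^ i / i !) α := by
  refine HasDerivAt.fun_sum fun i _ => ?_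
  simpa using (hasDerivAt_pow (i + 1) α).div_const (i ! : ℝ)

theorem sum_range_succ_mul_pow_div_factorial_sub (M : ℕ) (α : ℝ) :
    ∑ i ∈ range M, (i + 1) * α ^ i / (i ! : ℝ) - ∑ i ∈ range M, α ^ (i + 1) / i !
      = ∑ i ∈ range M, α ^ i / (i ! : ℝ) - M * α ^ M / M ! := by
  have hterm : ∀ i : ℕ, (i + 1) * α ^ i / (i ! : ℝ) - α ^ (i + 1) / i !
      = α ^ i / i ! + (i * α ^ i / (i ! : ℝ) - (i + 1 : ℕ) * α ^ (i + 1) / (i + 1)!) := by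
    intro i
    rw [factorial_succ]
    push_cast
    field_simp
    ring
  rw [← sum_sub_distrib, sum_congr rfl fun i _ => hterm i, sum_add_distrib, sum_range_sub']
  simp [sub_eq_add_neg]

theorem natCast_mul_pow_div_factorial {M : ℕ} (hM : 1 ≤ M) (α : ℝ) :
    M * α ^ M / M ! = α ^ M / (M - 1)! := by
  obtain ⟨n, rfl⟩ := exists_add_of_le hM
  rw [Nat.add_sub_cancel_left, add_comm, factorial_succ]
  push_cast
  field_simp

theorem hasDerivAt_Phi {M : ℕ} (hM : 1 ≤ M) (α : ℝ) :
    HasDerivAt (Phi M)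
      (exp (-α) * (∑ i ∈ range M, α ^ i / (i ! : ℝ) - α ^ M / (M - 1)!)) α := by
  have hPhi : Phi M = fun a => exp (-a) * ∑ i ∈ range M, a ^ (i + 1) / i ! := by
    ext a
    rw [Phi, sum_Icc_one_pow_div_factorial_pred]
  rw [hPhi, ← natCast_mul_pow_div_factorial hM, ← sum_range_succ_mul_pow_div_factorial_sub]
  exact (((hasDerivAt_neg α).exp).fun_mul
    (hasDerivAt_sum_range_pow_succ_div_factorial M α)).congr_deriv (by ring)

/-- for `M ≥ 1` and `0 ≤ α ≤ (M-1)/e`,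
`∑_{i=0}^{M-1} α^i/i! > α^M/(M-1)!`; consequently the derivative
`Φ'(α) = e^{-α}(∑_{i=0}^{M-1} α^i/i! - α^M/(M-1)!)` of `Φ` is strictly positive on
`[0, (M-1)/e]`, so `Φ` is strictly increasing there. -/
theorem phi_strictMono_left (M : ℕ) (hM : 1 ≤ M) :
    (∀ α : ℝ, 0 ≤ α → α ≤ ((M : ℝ) - 1) / Real.exp 1 →
        α ^ M / (Nat.factorial (M - 1) : ℝ)
          < ∑ i ∈ Finset.range M, α ^ i / (Nat.factorial i : ℝ)) ∧
    (∀ α : ℝ, 0 ≤ α → α ≤ ((M : ℝ) - 1) / Real.exp 1 →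
        HasDerivAt (Phi M)
          (Real.exp (-α) * (∑ i ∈ Finset.range M, α ^ i / (Nat.factorial i : ℝ)
            - α ^ M / (Nat.factorial (M - 1) : ℝ))) α) ∧
    (∀ α : ℝ, 0 ≤ α → α ≤ ((M : ℝ) - 1) / Real.exp 1 →
        0 < Real.exp (-α) * (∑ i ∈ Finset.range M, α ^ i / (Nat.factorial i : ℝ)
          - α ^ M / (Nat.factorial (M - 1) : ℝ))) ∧
    StrictMonoOn (Phi M) (Set.Icc 0 (((M : ℝ) - 1) / Real.exp 1)) := by
  have hderiv_pos : ∀ α : ℝ, 0 ≤ α → α ≤ ((M : ℝ) - 1) / exp 1 →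
      0 < exp (-α) * (∑ i ∈ range M, α ^ i / (i ! : ℝ) - α ^ M / (M - 1)!) := fun α h0 h1 =>
    mul_pos (exp_pos _) (sub_pos.mpr (pow_div_factorial_pred_lt_sum_range hM h0 h1))
  refine ⟨fun α h0 h1 => pow_div_factorial_pred_lt_sum_range hM h0 h1,
    fun α _ _ => hasDerivAt_Phi hM α, hderiv_pos, ?_⟩
  refine strictMonoOn_of_deriv_pos (convex_Icc _ _)
    (fun x _ => (hasDerivAt_Phi hM x).continuousAt.continuousWithinAt) fun x hx => ?_
  rw [interior_Icc] at hx
  rw [(hasDerivAt_Phi hM x).deriv]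
  exact hderiv_pos x hx.1.le hx.2.le
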